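/- arXiv:1003.0118 — 2 statements merged into one kernel-verified Lean document; each statement's English description precedes it below -/
import Mathlib

section
/- Every vertex of a stochastic game with a reachability objective has a value; that is, for every vertex v, sup over strategies σ of player Box of inf over strategies π of player Diamond of the probability of reaching the target set T from v equals inf over π of sup over σ of the same probability. -/
open scoped Classical

/-- A stochastic game: a directed graph with a total edge relation, vertices
partitioned among player Box, player Diamond and probabilistic vertices,
the latter carrying a positive probability distribution on outgoing edges. -/
structure SGame (V : Type*) where
  edge : V → V → Prop
  total : ∀ v, ∃ u, edge v u
  isBox : V → Prop
  isDiamond : V → Prop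
  isCirc : V → Prop
  cover : ∀ v, isBox v ∨ isDiamond v ∨ isCirc v
  disjBD : ∀ v, ¬ (isBox v ∧ isDiamond v)
  disjBC : ∀ v, ¬ (isBox v ∧ isCirc v)
  disjDC : ∀ v, ¬ (isDiamond v ∧ isCirc v)
  prob : V → V → ℝ
  prob_nonneg : ∀ v u, 0 ≤ prob v u
  prob_supp : ∀ v u, isCirc v → (0 < prob v u ↔ edge v u)
  prob_sum : ∀ v, isCirc v → ∑' u, prob v u = 1

/-- A history-dependent randomized strategy for the player owning the vertices
satisfying `own`: it assigns to every history `w` and current vertex `v` owned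
by the player a probability distribution on the outgoing edges of `v`. -/
structure SGame.Strat {V : Type*} (G : SGame V) (own : V → Prop) where
  f : List V → V → V → ℝ
  nonneg : ∀ w v u, 0 ≤ f w v u
  supp : ∀ w v u, own v → f w v u ≠ 0 → G.edge v u
  sum_one : ∀ w v, own v → ∑' u, f w v u = 1

/-- One-step transition probability of the play `G(σ,π)` given history `w`. -/
noncomputable def SGame.step {V : Type*} (G : SGame V) (σ : G.Strat G.isBox)
    (π : G.Strat G.isDiamond) (w : List V) (v u : V) : ℝ :=
  if G.isBox v then σ.f w v u else if G.isDiamond v then π.f w v u else G.prob v u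

/-- Probability of reaching the target set `T` from `v` within at most `n`
transitions in the play `G(σ,π)`, given that history `w` has elapsed. -/
noncomputable def SGame.reachN {V : Type*} (G : SGame V) (σ : G.Strat G.isBox)
    (π : G.Strat G.isDiamond) (T : Set V) : ℕ → List V → V → ℝ
  | 0, _, v => if v ∈ T then 1 else 0
  | n+1, w, v => if v ∈ T then 1 else
      ∑' u, G.step σ π w v u * SGame.reachN G σ π T n (w ++ [v]) u

/-- Probability `P_v^{σ,π}(Reach(T))` of reaching `T` from `v` in the play `G(σ,π)`. -/
noncomputable def SGame.reachP {V : Type*} (G : SGame V) (σ : G.Strat G.isBox)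
    (π : G.Strat G.isDiamond) (T : Set V) (v : V) : ℝ :=
  ⨆ n, G.reachN σ π T n [] v

/-- The (lower) value `sup_σ inf_π P_v^{σ,π}(Reach(T))` of vertex `v`. -/
noncomputable def SGame.val {V : Type*} (G : SGame V) (T : Set V) (v : V) : ℝ :=
  ⨆ σ : G.Strat G.isBox, ⨅ π : G.Strat G.isDiamond, G.reachP σ π T v

/-- The Bellman operator on functions `V → [0,1]`. -/
noncomputable def SGame.bellman {V : Type*} (G : SGame V) (T : Set V)
    (f : V → ℝ) : V → ℝ := fun v =>
  if v ∈ T then 1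
  else if G.isBox v then sSup (f '' {u | G.edge v u})
  else if G.isDiamond v then sInf (f '' {u | G.edge v u})
  else ∑' u, G.prob v u * f u

/-!
Both sides are compared with the lower value `val`. On the one hand `val` is a pre-fixed point
of the Bellman operator: Box can make one move and then switch, at the vertex reached, to a
nearly optimal strategy from there, so `val` dominates its own one-step average. On the other
hand, against any `[0, 1]`-valued pre-fixed point `f` of the Bellman operator, Diamond keeps the
reach probability below `f v + ε` by always moving to a successor that nearly minimises `f`, with
tolerance `ε / 2 ^ (k + 1)` at the `k`-th move. Hence the upper value is at most `val`.
-/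

open Filter Topology Set

lemma ciSup_ciInf_le_ciInf_ciSup {α ι ι' : Type*} [ConditionallyCompleteLattice α]
    [Nonempty ι] [Nonempty ι'] {f : ι → ι' → α} {a b : α} (ha : ∀ i j, a ≤ f i j)
    (hb : ∀ i j, f i j ≤ b) : ⨆ i, ⨅ j, f i j ≤ ⨅ j, ⨆ i, f i j :=
  le_ciInf fun j => ciSup_le fun i =>
    (ciInf_le ⟨a, by rintro _ ⟨j', rfl⟩; exact ha i j'⟩ j).trans
      (le_ciSup (f := fun i' => f i' j) ⟨b, by rintro _ ⟨i', rfl⟩; exact hb i' j⟩ i)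

def IsProbDist {α : Type*} (p : α → ℝ) : Prop := (∀ a, 0 ≤ p a) ∧ HasSum p 1

namespace IsProbDist

variable {α : Type*} {p : α → ℝ}

lemma of_tsum_eq_one (h0 : ∀ a, 0 ≤ p a) (h1 : ∑' a, p a = 1) : IsProbDist p := by
  have hs : Summable p := by
    by_contra hs
    rw [tsum_eq_zero_of_not_summable hs] at h1
    exact zero_ne_one h1
  exact ⟨h0, h1 ▸ hs.hasSum⟩

lemma norm_mul_le (hp : IsProbDist p) {g : α → ℝ} {m M : ℝ} {a : α} (hg : g a ∈ Icc m M) :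
    ‖p a * g a‖ ≤ p a * max |m| |M| := by
  rw [Real.norm_eq_abs, abs_mul, abs_of_nonneg (hp.1 a)]
  exact mul_le_mul_of_nonneg_left (abs_le_max_abs_abs hg.1 hg.2) (hp.1 a)

lemma summable_mul (hp : IsProbDist p) {g : α → ℝ} {m M : ℝ} (hg : ∀ a, g a ∈ Icc m M) :
    Summable fun a => p a * g a :=
  Summable.of_norm_bounded (hp.2.summable.mul_right _) fun a => hp.norm_mul_le (hg a)

lemma tsum_mul_const (hp : IsProbDist p) (c : ℝ) : ∑' a, p a * c = c := by
  rw [tsum_mul_right, hp.2.tsum_eq, one_mul]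

lemma tsum_mul_add_const (hp : IsProbDist p) {g : α → ℝ} {m M : ℝ} (hg : ∀ a, g a ∈ Icc m M)
    (c : ℝ) : ∑' a, p a * (g a + c) = ∑' a, p a * g a + c := by
  simp_rw [mul_add]
  rw [(hp.summable_mul hg).tsum_add (hp.2.summable.mul_right c), hp.tsum_mul_const]

lemma tsum_mul_le_tsum_mul (hp : IsProbDist p) {g h : α → ℝ} {m M m' M' : ℝ}
    (hg : ∀ a, g a ∈ Icc m M) (hh : ∀ a, h a ∈ Icc m' M') (hgh : ∀ a, p a ≠ 0 → g a ≤ h a) :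
    ∑' a, p a * g a ≤ ∑' a, p a * h a := by
  refine (hp.summable_mul hg).tsum_le_tsum (fun a => ?_) (hp.summable_mul hh)
  by_cases hpa : p a = 0
  · simp [hpa]
  · exact mul_le_mul_of_nonneg_left (hgh a hpa) (hp.1 a)

lemma tsum_mul_le (hp : IsProbDist p) {g : α → ℝ} {m M c : ℝ} (hg : ∀ a, g a ∈ Icc m M)
    (hc : ∀ a, p a ≠ 0 → g a ≤ c) : ∑' a, p a * g a ≤ c :=
  (hp.tsum_mul_le_tsum_mul hg (fun _ => ⟨le_refl c, le_refl c⟩) hc).trans_eq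
    (hp.tsum_mul_const c)

lemma le_tsum_mul (hp : IsProbDist p) {g : α → ℝ} {m M c : ℝ} (hg : ∀ a, g a ∈ Icc m M)
    (hc : ∀ a, p a ≠ 0 → c ≤ g a) : c ≤ ∑' a, p a * g a :=
  (hp.tsum_mul_const c).symm.trans_le
    (hp.tsum_mul_le_tsum_mul (fun _ => ⟨le_refl c, le_refl c⟩) hg hc)

lemma tendsto_tsum_mul (hp : IsProbDist p) {ι : Type*} {l : Filter ι} {r : ι → α → ℝ}
    {g : α → ℝ} {m M : ℝ} (hr : ∀ i a, r i a ∈ Icc m M)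
    (hlim : ∀ a, Tendsto (fun i => r i a) l (𝓝 (g a))) :
    Tendsto (fun i => ∑' a, p a * r i a) l (𝓝 (∑' a, p a * g a)) :=
  tendsto_tsum_of_dominated_convergence (hp.2.summable.mul_right (max |m| |M|))
    (fun a => (hlim a).const_mul (p a))
    (Eventually.of_forall fun i a => hp.norm_mul_le (hr i a))

end IsProbDist

namespace SGame

variable {V : Type*} {G : SGame V} {T : Set V} {v : V}

lemma isCirc_of_not_isBox_of_not_isDiamond (hb : ¬ G.isBox v) (hd : ¬ G.isDiamond v) :
    G.isCirc v :=
  (G.cover v).resolve_left hb |>.resolve_left hd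

lemma not_isBox_of_isDiamond (hd : G.isDiamond v) : ¬ G.isBox v :=
  fun hb => G.disjBD v ⟨hb, hd⟩

lemma not_isBox_of_isCirc (hc : G.isCirc v) : ¬ G.isBox v :=
  fun hb => G.disjBC v ⟨hb, hc⟩

lemma not_isDiamond_of_isCirc (hc : G.isCirc v) : ¬ G.isDiamond v :=
  fun hd => G.disjDC v ⟨hd, hc⟩

lemma step_of_isBox (σ : G.Strat G.isBox) (π : G.Strat G.isDiamond) (w : List V)
    (hb : G.isBox v) : G.step σ π w v = σ.f w v := by
  ext u
  simp [step, hb]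

lemma step_of_isDiamond (σ : G.Strat G.isBox) (π : G.Strat G.isDiamond) (w : List V)
    (hd : G.isDiamond v) : G.step σ π w v = π.f w v := by
  ext u
  simp [step, hd, not_isBox_of_isDiamond hd]

lemma step_of_isCirc (σ : G.Strat G.isBox) (π : G.Strat G.isDiamond) (w : List V)
    (hc : G.isCirc v) : G.step σ π w v = G.prob v := by
  ext u
  simp [step, not_isBox_of_isCirc hc, not_isDiamond_of_isCirc hc]

lemma Strat.isProbDist {own : V → Prop} (τ : G.Strat own) (w : List V) (hv : own v) :
    IsProbDist (τ.f w v) :=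
  .of_tsum_eq_one (τ.nonneg w v) (τ.sum_one w v hv)

lemma isProbDist_prob (hc : G.isCirc v) : IsProbDist (G.prob v) :=
  .of_tsum_eq_one (G.prob_nonneg v) (G.prob_sum v hc)

lemma isProbDist_step (σ : G.Strat G.isBox) (π : G.Strat G.isDiamond) (w : List V) (v : V) :
    IsProbDist (G.step σ π w v) := by
  by_cases hb : G.isBox v
  · rw [step_of_isBox σ π w hb]; exact σ.isProbDist w hb
  by_cases hd : G.isDiamond v
  · rw [step_of_isDiamond σ π w hd]; exact π.isProbDist w hd
  rw [step_of_isCirc σ π w (isCirc_of_not_isBox_of_not_isDiamond hb hd)]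
  exact isProbDist_prob (isCirc_of_not_isBox_of_not_isDiamond hb hd)

variable {f : V → ℝ}

lemma bellman_of_mem (hv : v ∈ T) : G.bellman T f v = 1 := by
  simp [bellman, hv]

lemma bellman_of_isBox (hv : v ∉ T) (hb : G.isBox v) :
    G.bellman T f v = sSup (f '' {u | G.edge v u}) := by
  simp [bellman, hv, hb]

lemma bellman_of_isDiamond (hv : v ∉ T) (hd : G.isDiamond v) :
    G.bellman T f v = sInf (f '' {u | G.edge v u}) := by
  simp [bellman, hv, hd, not_isBox_of_isDiamond hd]

lemma bellman_of_isCirc (hv : v ∉ T) (hc : G.isCirc v) :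
    G.bellman T f v = ∑' u, G.prob v u * f u := by
  simp [bellman, hv, not_isBox_of_isCirc hc, not_isDiamond_of_isCirc hc]

variable (G) in
noncomputable def diracStrat (own : V → Prop) (c : List V → V → V)
    (hc : ∀ w x, G.edge x (c w x)) : G.Strat own where
  f w x u := if u = c w x then 1 else 0
  nonneg w x u := by positivity
  supp w x u _ h := by
    by_cases hu : u = c w x
    · exact hu ▸ hc w x
    · simp [hu] at h
  sum_one w x _ := tsum_ite_eq (c w x) 1

lemma tsum_diracStrat_mul {own : V → Prop} {c : List V → V → V}
    (hc : ∀ w x, G.edge x (c w x)) (w : List V) (x : V) (g : V → ℝ) :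
    ∑' u, (G.diracStrat own c hc).f w x u * g u = g (c w x) := by
  simp [diracStrat]

instance (own : V → Prop) : Nonempty (G.Strat own) :=
  ⟨G.diracStrat own (fun _ x => (G.total x).choose) (fun _ x => (G.total x).choose_spec)⟩

def Strat.shift {own : V → Prop} (τ : G.Strat own) (p : List V) : G.Strat own where
  f w := τ.f (p ++ w)
  nonneg w := τ.nonneg (p ++ w)
  supp w := τ.supp (p ++ w)
  sum_one w := τ.sum_one (p ++ w)

/-- Play `τ₀` for the first move, then `h u` as if the game had started at the vertex `u` reached;
at history `_ :: w` and current vertex `x`, that vertex is `w.headD x`. -/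
def Strat.andThen {own : V → Prop} (τ₀ : G.Strat own) (h : V → G.Strat own) : G.Strat own where
  f
    | [] => τ₀.f []
    | _ :: w => fun x => (h (w.headD x)).f w x
  nonneg
    | [] => τ₀.nonneg []
    | _ :: w => fun x => (h (w.headD x)).nonneg w x
  supp
    | [] => τ₀.supp []
    | _ :: w => fun x => (h (w.headD x)).supp w x
  sum_one
    | [] => τ₀.sum_one []
    | _ :: w => fun x => (h (w.headD x)).sum_one w x

variable (σ : G.Strat G.isBox) (π : G.Strat G.isDiamond)

lemma reachN_of_mem (n : ℕ) (w : List V) (hv : v ∈ T) : G.reachN σ π T n w v = 1 := by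
  cases n <;> simp [reachN, hv]

lemma reachN_succ_of_not_mem (n : ℕ) (w : List V) (hv : v ∉ T) :
    G.reachN σ π T (n + 1) w v = ∑' u, G.step σ π w v u * G.reachN σ π T n (w ++ [v]) u := by
  simp [reachN, hv]

lemma reachN_mem_Icc (n : ℕ) : ∀ w v, G.reachN σ π T n w v ∈ Icc 0 1 := by
  induction n with
  | zero => intro w v; by_cases hv : v ∈ T <;> simp [reachN, hv]
  | succ n ih =>
    intro w v
    by_cases hv : v ∈ T
    · simp [reachN_of_mem σ π _ w hv]
    rw [reachN_succ_of_not_mem σ π n w hv]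
    have hp := G.isProbDist_step σ π w v
    exact ⟨hp.le_tsum_mul (ih _) fun u _ => (ih _ u).1,
      hp.tsum_mul_le (ih _) fun u _ => (ih _ u).2⟩

lemma reachN_le_reachN_succ (n : ℕ) :
    ∀ w v, G.reachN σ π T n w v ≤ G.reachN σ π T (n + 1) w v := by
  induction n with
  | zero =>
    intro w v
    by_cases hv : v ∈ T
    · simp [reachN_of_mem σ π _ w hv]
    · simpa [reachN, hv] using (reachN_mem_Icc (T := T) σ π 1 w v).1
  | succ n ih =>
    intro w v
    by_cases hv : v ∈ T
    · simp [reachN_of_mem σ π _ w hv]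
    rw [reachN_succ_of_not_mem σ π _ w hv, reachN_succ_of_not_mem σ π _ w hv]
    exact (G.isProbDist_step σ π w v).tsum_mul_le_tsum_mul (reachN_mem_Icc σ π n _)
      (reachN_mem_Icc σ π (n + 1) _) fun u _ => ih _ u

lemma tendsto_reachN (v : V) :
    Tendsto (fun n => G.reachN σ π T n [] v) atTop (𝓝 (G.reachP σ π T v)) :=
  tendsto_atTop_ciSup (monotone_nat_of_le_succ fun n => reachN_le_reachN_succ σ π n [] v)
    ⟨1, by rintro _ ⟨n, rfl⟩; exact (reachN_mem_Icc σ π n [] v).2⟩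

lemma reachP_mem_Icc (v : V) : G.reachP σ π T v ∈ Icc 0 1 :=
  isClosed_Icc.mem_of_tendsto (tendsto_reachN σ π v)
    (Eventually.of_forall fun n => reachN_mem_Icc σ π n [] v)

lemma reachP_of_mem (hv : v ∈ T) : G.reachP σ π T v = 1 := by
  simp [reachP, reachN_of_mem σ π _ _ hv]

lemma reachN_andThen (τ₀ : G.Strat G.isBox) (h : V → G.Strat G.isBox) (v : V) (n : ℕ) :
    ∀ w x, G.reachN (τ₀.andThen h) π T n (v :: w) x
      = G.reachN (h (w.headD x)) (π.shift [v]) T n w x := by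
  induction n with
  | zero => intro w x; rfl
  | succ n ih =>
    intro w x
    by_cases hx : x ∈ T
    · simp [reachN_of_mem _ _ _ _ hx]
    rw [reachN_succ_of_not_mem _ _ _ _ hx, reachN_succ_of_not_mem _ _ _ _ hx]
    refine tsum_congr fun u => ?_
    have hhead : (w ++ [x]).headD u = w.headD x := by cases w <;> rfl
    rw [List.cons_append, ih, hhead]
    rfl

lemma reachP_andThen (τ₀ : G.Strat G.isBox) (h : V → G.Strat G.isBox) (hv : v ∉ T) :
    G.reachP (τ₀.andThen h) π T v
      = ∑' u, G.step τ₀ π [] v u * G.reachP (h u) (π.shift [v]) T u := by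
  refine tendsto_nhds_unique ((tendsto_reachN _ π v).comp (tendsto_add_atTop_nat 1)) ?_
  have hunfold : ∀ n, G.reachN (τ₀.andThen h) π T (n + 1) [] v
      = ∑' u, G.step τ₀ π [] v u * G.reachN (h u) (π.shift [v]) T n [] u := fun n => by
    rw [reachN_succ_of_not_mem _ _ _ _ hv]
    exact tsum_congr fun u => congrArg _ (reachN_andThen π τ₀ h v n [] u)
  simp only [Function.comp_def, hunfold]
  exact (G.isProbDist_step τ₀ π [] v).tendsto_tsum_mul
    (fun n u => reachN_mem_Icc _ _ n [] u) fun u => tendsto_reachN _ _ u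

variable (G) in
noncomputable def guaranteed (σ : G.Strat G.isBox) (T : Set V) (v : V) : ℝ :=
  ⨅ π : G.Strat G.isDiamond, G.reachP σ π T v

lemma guaranteed_le_reachP : G.guaranteed σ T v ≤ G.reachP σ π T v :=
  ciInf_le ⟨0, by rintro _ ⟨π', rfl⟩; exact (reachP_mem_Icc σ π' v).1⟩ π

lemma guaranteed_mem_Icc : G.guaranteed σ T v ∈ Icc 0 1 :=
  ⟨le_ciInf fun π => (reachP_mem_Icc σ π v).1,
    (guaranteed_le_reachP σ (Classical.arbitrary _)).trans (reachP_mem_Icc σ _ v).2⟩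

lemma guaranteed_le_val : G.guaranteed σ T v ≤ G.val T v :=
  le_ciSup (f := fun σ' => G.guaranteed σ' T v)
    ⟨1, by rintro _ ⟨σ', rfl⟩; exact (guaranteed_mem_Icc σ').2⟩ σ

variable (G) in
lemma val_mem_Icc (T : Set V) (v : V) : G.val T v ∈ Icc 0 1 :=
  ⟨(guaranteed_mem_Icc (Classical.arbitrary _)).1.trans
      (guaranteed_le_val (Classical.arbitrary _)),
    ciSup_le fun σ => (guaranteed_mem_Icc σ).2⟩

variable (G) in
lemma exists_lt_guaranteed_add (T : Set V) (v : V) {δ : ℝ} (hδ : 0 < δ) :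
    ∃ σ : G.Strat G.isBox, G.val T v < G.guaranteed σ T v + δ := by
  obtain ⟨σ, hσ⟩ := exists_lt_of_lt_ciSup (f := fun σ => G.guaranteed σ T v)
    (sub_lt_self (G.val T v) hδ)
  exact ⟨σ, by linarith⟩

/-- Box plays `τ₀` once and then a `δ`-optimal strategy from the vertex reached. -/
lemma le_val_of_le_tsum_step (τ₀ : G.Strat G.isBox) (hv : v ∉ T) {c : ℝ}
    (hc : ∀ π, c ≤ ∑' u, G.step τ₀ π [] v u * G.val T u) : c ≤ G.val T v := by
  refine le_of_forall_pos_le_add fun δ hδ => ?_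
  choose σs hσs using fun u => G.exists_lt_guaranteed_add T u hδ
  suffices c - δ ≤ G.guaranteed (τ₀.andThen σs) T v by
    linarith [guaranteed_le_val (T := T) (v := v) (τ₀.andThen σs)]
  refine le_ciInf fun π => ?_
  have hp := G.isProbDist_step τ₀ π [] v
  calc c - δ ≤ ∑' u, G.step τ₀ π [] v u * (G.val T u + -δ) := by
        rw [hp.tsum_mul_add_const (G.val_mem_Icc T)]; linarith [hc π]
    _ ≤ ∑' u, G.step τ₀ π [] v u * G.reachP (σs u) (π.shift [v]) T u := by
        have hval := G.val_mem_Icc T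
        refine hp.tsum_mul_le_tsum_mul (m := -δ) (M := 1 - δ)
          (fun u => ⟨by linarith [(hval u).1], by linarith [(hval u).2]⟩)
          (fun u => reachP_mem_Icc _ _ u) fun u _ => ?_
        linarith [hσs u, guaranteed_le_reachP (σs u) (π.shift [v]) (T := T) (v := u)]
    _ = G.reachP (τ₀.andThen σs) π T v := (reachP_andThen π τ₀ σs hv).symm

lemma val_le_val_of_isBox (hv : v ∉ T) (hb : G.isBox v) {u : V} (hu : G.edge v u) :
    G.val T u ≤ G.val T v := by
  let c : List V → V → V := fun _ x => if x = v then u else (G.total x).choose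
  have hc : ∀ w x, G.edge x (c w x) := fun _ x => by
    by_cases hx : x = v
    · simpa [c, hx] using hu
    · simpa [c, hx] using (G.total x).choose_spec
  refine le_val_of_le_tsum_step (G.diracStrat _ c hc) hv fun π => ?_
  rw [step_of_isBox _ π _ hb, tsum_diracStrat_mul]
  simp [c]

lemma one_le_val_of_mem (hv : v ∈ T) : 1 ≤ G.val T v :=
  calc 1 ≤ G.guaranteed (Classical.arbitrary _) T v :=
        le_ciInf fun π => (reachP_of_mem _ π hv).ge
    _ ≤ G.val T v := guaranteed_le_val _

variable (G) in
lemma bellman_val_le (T : Set V) (v : V) : G.bellman T (G.val T) v ≤ G.val T v := by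
  by_cases hv : v ∈ T
  · rw [bellman_of_mem hv]
    exact one_le_val_of_mem hv
  by_cases hb : G.isBox v
  · rw [bellman_of_isBox hv hb]
    exact csSup_le (Set.Nonempty.image _ (G.total v))
      (by rintro _ ⟨u, hu, rfl⟩; exact val_le_val_of_isBox hv hb hu)
  by_cases hd : G.isDiamond v
  · rw [bellman_of_isDiamond hv hd]
    refine le_val_of_le_tsum_step (Classical.arbitrary _) hv fun π => ?_
    rw [step_of_isDiamond _ π _ hd]
    exact (π.isProbDist [] hd).le_tsum_mul (G.val_mem_Icc T) fun u hu =>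
      csInf_le ⟨0, by rintro _ ⟨u', _, rfl⟩; exact (G.val_mem_Icc T u').1⟩
        ⟨u, π.supp [] v u hd hu, rfl⟩
  have hc := isCirc_of_not_isBox_of_not_isDiamond hb hd
  rw [bellman_of_isCirc hv hc]
  exact le_val_of_le_tsum_step (Classical.arbitrary _) hv fun π => by
    rw [step_of_isCirc _ π _ hc]

variable (G) in
lemma exists_edge_lt_sInf_add (f : V → ℝ) (x : V) {η : ℝ} (hη : 0 < η) :
    ∃ u, G.edge x u ∧ f u < sInf (f '' {u | G.edge x u}) + η := by
  obtain ⟨_, ⟨u, hu, rfl⟩, hlt⟩ :=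
    Real.lt_sInf_add_pos (Set.Nonempty.image f (G.total x)) hη
  exact ⟨u, hu, hlt⟩

variable (G) in
noncomputable def nearMinSucc (f : V → ℝ) {η : ℝ} (hη : 0 < η) (x : V) : V :=
  (G.exists_edge_lt_sInf_add f x hη).choose

lemma edge_nearMinSucc (f : V → ℝ) {η : ℝ} (hη : 0 < η) (x : V) :
    G.edge x (G.nearMinSucc f hη x) :=
  (G.exists_edge_lt_sInf_add f x hη).choose_spec.1

variable (G) in
lemma nearMinSucc_lt (f : V → ℝ) {η : ℝ} (hη : 0 < η) (x : V) :
    f (G.nearMinSucc f hη x) < sInf (f '' {u | G.edge x u}) + η :=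
  (G.exists_edge_lt_sInf_add f x hη).choose_spec.2

variable (G) in
noncomputable def nearMinStrat {own : V → Prop} (f : V → ℝ) {ε : ℝ} (hε : 0 < ε) :
    G.Strat own :=
  G.diracStrat own (fun w => G.nearMinSucc f (η := ε / 2 ^ (w.length + 1)) (by positivity))
    fun _ => edge_nearMinSucc f _

variable {ε : ℝ} (hε : 0 < ε)

lemma tsum_step_nearMinStrat_le (hf : ∀ u, f u ∈ Icc 0 1) (hfix : ∀ u, G.bellman T f u ≤ f u)
    (hv : v ∉ T) (w : List V) :
    ∑' u, G.step σ (G.nearMinStrat f hε) w v u * f u ≤ f v + ε / 2 ^ (w.length + 1) := by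
  have hη : 0 < ε / 2 ^ (w.length + 1) := by positivity
  by_cases hb : G.isBox v
  · rw [step_of_isBox _ _ _ hb]
    calc _ ≤ sSup (f '' {u | G.edge v u}) :=
          (σ.isProbDist w hb).tsum_mul_le hf fun u hu =>
            le_csSup ⟨1, by rintro _ ⟨u', _, rfl⟩; exact (hf u').2⟩
              ⟨u, σ.supp w v u hb hu, rfl⟩
      _ = G.bellman T f v := (bellman_of_isBox hv hb).symm
      _ ≤ f v + ε / 2 ^ (w.length + 1) := by linarith [hfix v]
  by_cases hd : G.isDiamond v
  · rw [step_of_isDiamond _ _ _ hd, nearMinStrat, tsum_diracStrat_mul]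
    have hmin := G.nearMinSucc_lt f hη v
    have hinf := hfix v
    rw [bellman_of_isDiamond hv hd] at hinf
    linarith
  have hc := isCirc_of_not_isBox_of_not_isDiamond hb hd
  rw [step_of_isCirc _ _ _ hc, ← bellman_of_isCirc hv hc]
  linarith [hfix v]

/-- The tolerances `ε / 2 ^ (k + 1)` of Diamond's successive moves add up to at most `ε`. -/
lemma reachN_nearMinStrat_le (hf : ∀ u, f u ∈ Icc 0 1) (hfix : ∀ u, G.bellman T f u ≤ f u)
    (n : ℕ) :
    ∀ w v, G.reachN σ (G.nearMinStrat f hε) T n w v ≤ f v + ε / 2 ^ w.length := by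
  have hη (k : ℕ) : 0 < ε / 2 ^ k := by positivity
  induction n with
  | zero =>
    intro w v
    by_cases hv : v ∈ T
    · rw [reachN_of_mem σ _ _ w hv]
      linarith [bellman_of_mem (f := f) hv ▸ hfix v, hη w.length]
    · simp only [reachN, hv, if_false]
      linarith [(hf v).1, hη w.length]
  | succ n ih =>
    intro w v
    by_cases hv : v ∈ T
    · rw [reachN_of_mem σ _ _ w hv]
      linarith [bellman_of_mem (f := f) hv ▸ hfix v, hη w.length]
    have hp := G.isProbDist_step σ (G.nearMinStrat f hε) w v
    have hlen : (w ++ [v]).length = w.length + 1 := by simp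
    rw [reachN_succ_of_not_mem _ _ _ _ hv]
    set π := G.nearMinStrat (own := G.isDiamond) f hε
    calc _ ≤ ∑' u, G.step σ π w v u * (f u + ε / 2 ^ (w.length + 1)) :=
          hp.tsum_mul_le_tsum_mul (reachN_mem_Icc _ _ n _)
            (fun u => ⟨add_nonneg (hf u).1 (hη _).le, add_le_add_left (hf u).2 _⟩)
            fun u _ => hlen ▸ ih (w ++ [v]) u
      _ = ∑' u, G.step σ π w v u * f u + ε / 2 ^ (w.length + 1) :=
          hp.tsum_mul_add_const hf _
      _ ≤ f v + ε / 2 ^ (w.length + 1) + ε / 2 ^ (w.length + 1) := by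
          linarith [tsum_step_nearMinStrat_le σ hε hf hfix hv w]
      _ = f v + ε / 2 ^ w.length := by rw [pow_succ]; ring

lemma iInf_iSup_reachP_le (hf : ∀ u, f u ∈ Icc 0 1) (hfix : ∀ u, G.bellman T f u ≤ f u)
    (v : V) : ⨅ π : G.Strat G.isDiamond, ⨆ σ : G.Strat G.isBox, G.reachP σ π T v ≤ f v := by
  refine le_of_forall_pos_le_add fun ε hε => ?_
  have hbdd : BddBelow (range fun π : G.Strat G.isDiamond => ⨆ σ, G.reachP σ π T v) :=
    ⟨0, by rintro _ ⟨π, rfl⟩; exact Real.iSup_nonneg fun σ => (reachP_mem_Icc σ π v).1⟩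
  refine ciInf_le_of_le hbdd (G.nearMinStrat f hε) (Real.iSup_le (fun σ => ?_) ?_)
  · exact le_of_tendsto' (tendsto_reachN σ _ v) fun n => by
      simpa using reachN_nearMinStrat_le σ hε hf hfix n [] v
  · linarith [(hf v).1]

end SGame

/-- Every vertex of a stochastic game with a reachability objective has a
value: `sup_σ inf_π P_v^{σ,π}(Reach(T)) = inf_π sup_σ P_v^{σ,π}(Reach(T))`. -/
theorem every_vertex_has_value {V : Type*} (G : SGame V) (T : Set V) (v : V) :
    (⨆ σ : G.Strat G.isBox, ⨅ π : G.Strat G.isDiamond, G.reachP σ π T v)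
      = ⨅ π : G.Strat G.isDiamond, ⨆ σ : G.Strat G.isBox, G.reachP σ π T v :=
  le_antisymm
    (ciSup_ciInf_le_ciInf_ciSup (fun σ π => (SGame.reachP_mem_Icc σ π v).1)
      fun σ π => (SGame.reachP_mem_Icc σ π v).2)
    (SGame.iInf_iSup_reachP_le (G.val_mem_Icc T) (G.bellman_val_le T) v)
end

section
/- In a finitely-branching stochastic game with reachability objective, for every vertex v and every ε > 0 there exist a strategy σ for player Box and a natural number n such that for every strategy π of player Diamond, the probability of reaching T from v within at most n steps exceeds val(v) − ε. -/
open scoped Classical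

/-!
Fix a Box strategy `σ` with `val(v) - ε < P_v^{σ,π}(Reach(T))` for every `π`; the point is that
the horizon needed to exceed `val(v) - ε` can be chosen uniformly in `π`. Under finite branching,
Diamond strategies are determined, as far as the play is concerned, by their choice functions,
which form a compact subset of a product of intervals `[0,1]`. Each `n`-step reachability
probability is a continuous function of these choices, nondecreasing in `n`, so the open sets
`{π | val(v) - ε < P_v^{σ,π}(Reach_n(T))}` form an increasing open cover of a compact set, and
one of them already covers it.
-/

theorem IsCompact.exists_forall_lt_of_monotone {X ι α : Type*} [TopologicalSpace X]
    [Nonempty ι] [Preorder ι] [IsDirectedOrder ι] [Preorder α] {K : Set X} (hK : IsCompact K)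
    {f : ι → X → α} (hf : ∀ i, LowerSemicontinuous (f i))
    (hmono : ∀ x ∈ K, Monotone fun i => f i x) {c : α} (hc : ∀ x ∈ K, ∃ i, c < f i x) :
    ∃ i, ∀ x ∈ K, c < f i x := by
  obtain ⟨s, hs⟩ := hK.elim_finite_subcover (fun i => f i ⁻¹' Set.Ioi c)
    (fun i => (hf i).isOpen_preimage c) fun x hx => Set.mem_iUnion.2 (hc x hx)
  obtain ⟨j, hj⟩ := s.exists_le
  refine ⟨j, fun x hx => ?_⟩
  obtain ⟨i, hi, hx'⟩ := Set.mem_iUnion₂.1 (hs hx)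
  exact lt_of_lt_of_le hx' (hmono x hx (hj i hi))

section ReachWithin

variable {V : Type*} (E : V → Finset V) (T : Set V)

noncomputable def reachWithin (p : List V → V → V → ℝ) : ℕ → List V → V → ℝ
  | 0, _, v => if v ∈ T then 1 else 0
  | n+1, w, v => if v ∈ T then 1 else
      ∑ u ∈ E v, p w v u * reachWithin p n (w ++ [v]) u

variable {E T} {p : List V → V → V → ℝ}

theorem reachWithin_nonneg (hp : ∀ w v u, 0 ≤ p w v u) :
    ∀ n w v, 0 ≤ reachWithin E T p n w v
  | 0, _, v => by unfold reachWithin; split_ifs <;> norm_num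
  | n+1, w, v => by
    unfold reachWithin
    split_ifs
    · exact zero_le_one
    · exact Finset.sum_nonneg fun u _ => mul_nonneg (hp w v u) (reachWithin_nonneg hp n _ u)

theorem reachWithin_le_succ (hp : ∀ w v u, 0 ≤ p w v u) :
    ∀ n w v, reachWithin E T p n w v ≤ reachWithin E T p (n+1) w v
  | 0, w, v => by
    conv_lhs => unfold reachWithin
    split_ifs with hv
    · simp [reachWithin, hv]
    · exact reachWithin_nonneg hp 1 w v
  | n+1, w, v => by
    rw [reachWithin, reachWithin]
    split_ifs
    · rfl
    · exact Finset.sum_le_sum fun u _ =>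
        mul_le_mul_of_nonneg_left (reachWithin_le_succ hp n _ u) (hp w v u)

theorem monotone_reachWithin (hp : ∀ w v u, 0 ≤ p w v u) (w : List V) (v : V) :
    Monotone fun n => reachWithin E T p n w v :=
  monotone_nat_of_le_succ fun n => reachWithin_le_succ hp n w v

variable (E T)

theorem continuous_reachWithin :
    ∀ n w v, Continuous fun p : List V → V → V → ℝ => reachWithin E T p n w v
  | 0, _, _ => continuous_const
  | n+1, w, v => by
    unfold reachWithin
    split_ifs
    · exact continuous_const
    · have := continuous_reachWithin n
      fun_prop

end ReachWithin

namespace SGame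

variable {V : Type*} (G : SGame V) {T : Set V} (σ : G.Strat G.isBox)

instance Strat.instNonempty (own : V → Prop) : Nonempty (G.Strat own) :=
  ⟨{ f := fun _ v u => if u = (G.total v).choose then 1 else 0
     nonneg := fun _ _ _ => by split_ifs <;> norm_num
     supp := fun _ v u _ h => by
       by_cases hu : u = (G.total v).choose
       · exact hu ▸ (G.total v).choose_spec
       · simp [hu] at h
     sum_one := fun _ _ _ => tsum_ite_eq _ 1 }⟩

/-- `G.step σ π` is definitionally `G.stepWith σ π.f`. -/
noncomputable def stepWith (d : List V → V → V → ℝ) (w : List V) (v u : V) : ℝ :=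
  if G.isBox v then σ.f w v u else if G.isDiamond v then d w v u else G.prob v u

theorem continuous_stepWith : Continuous (G.stepWith σ) := by
  refine continuous_pi fun w => continuous_pi fun v => continuous_pi fun u => ?_
  unfold stepWith
  split_ifs <;> fun_prop

theorem stepWith_nonneg {d : List V → V → V → ℝ} (hd : ∀ w v u, 0 ≤ d w v u)
    (w : List V) (v u : V) : 0 ≤ G.stepWith σ d w v u := by
  unfold stepWith
  split_ifs
  exacts [σ.nonneg w v u, hd w v u, G.prob_nonneg v u]

theorem step_eq_zero_of_not_edge (π : G.Strat G.isDiamond) {w : List V} {v u : V}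
    (h : ¬ G.edge v u) : G.step σ π w v u = 0 := by
  unfold step
  split_ifs with hB hD
  · exact not_not.1 (mt (σ.supp w v u hB) h)
  · exact not_not.1 (mt (π.supp w v u hD) h)
  · have hC : G.isCirc v := (G.cover v).resolve_left hB |>.resolve_left hD
    exact le_antisymm (not_lt.1 (mt (G.prob_supp v u hC).1 h)) (G.prob_nonneg v u)

theorem reachN_nonneg (π : G.Strat G.isDiamond) : ∀ n w v, 0 ≤ G.reachN σ π T n w v
  | 0, _, v => by unfold reachN; split_ifs <;> norm_num
  | n+1, w, v => by
    unfold reachN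
    split_ifs
    · exact zero_le_one
    · exact tsum_nonneg fun u =>
        mul_nonneg (G.stepWith_nonneg σ π.nonneg w v u) (reachN_nonneg π n _ u)

theorem bddBelow_range_reachP (v : V) :
    BddBelow (Set.range fun π => G.reachP σ π T v) :=
  ⟨0, Set.forall_mem_range.2 fun π => Real.iSup_nonneg fun n => G.reachN_nonneg σ π n [] v⟩

/-- Choice functions of Diamond strategies, confined to a product of intervals `[0,1]` so as to be
compact; their values outside Diamond vertices are irrelevant to the play. -/
def diamondChoices (E : V → Finset V) : Set (List V → V → V → ℝ) :=
  {d | (∀ w v u, d w v u ∈ Set.Icc 0 1) ∧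
    (∀ w v u, G.isDiamond v → ¬ G.edge v u → d w v u = 0) ∧
    ∀ w v, G.isDiamond v → ∑ u ∈ E v, d w v u = 1}

theorem isCompact_diamondChoices (E : V → Finset V) : IsCompact (G.diamondChoices E) := by
  have hclosed : IsClosed (G.diamondChoices E) := by
    simp only [diamondChoices, Set.ofPred_and, Set.ofPred_forall, Set.mem_Icc]
    repeat' first
      | apply IsClosed.inter
      | apply isClosed_iInter; intro
    all_goals first
      | exact isClosed_le continuous_const (by fun_prop)
      | exact isClosed_le (by fun_prop) continuous_const
      | exact isClosed_eq (by fun_prop) continuous_const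
  refine (isCompact_univ_pi fun _ => isCompact_univ_pi fun _ => isCompact_univ_pi fun _ =>
    isCompact_Icc (a := (0 : ℝ)) (b := 1)).of_isClosed_subset hclosed fun d hd => ?_
  simpa only [Set.mem_univ_pi] using hd.1

noncomputable def toDiamondChoice (π : G.Strat G.isDiamond) : List V → V → V → ℝ :=
  fun w v u => if G.isDiamond v then π.f w v u else 0

theorem stepWith_toDiamondChoice (π : G.Strat G.isDiamond) :
    G.stepWith σ (G.toDiamondChoice π) = G.step σ π := by
  ext w v u
  simp only [stepWith, step, toDiamondChoice]
  split_ifs <;> rfl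

variable {E : V → Finset V} (hE : ∀ v u, G.edge v u → u ∈ E v)
include hE

theorem reachN_eq_reachWithin (π : G.Strat G.isDiamond) :
    ∀ n w v, G.reachN σ π T n w v = reachWithin E T (G.step σ π) n w v
  | 0, _, _ => rfl
  | n+1, w, v => by
    rw [reachN, reachWithin]
    split_ifs
    · rfl
    · rw [tsum_eq_sum fun u hu => by
        rw [G.step_eq_zero_of_not_edge σ π (mt (hE v u) hu), zero_mul]]
      exact Finset.sum_congr rfl fun u _ => by rw [reachN_eq_reachWithin π n]

variable {G} in
theorem Strat.sum_eq_one {own : V → Prop} (π : G.Strat own) (w : List V) {v : V} (hv : own v) :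
    ∑ u ∈ E v, π.f w v u = 1 := by
  rw [← tsum_eq_sum (L := .unconditional V) fun u hu =>
    not_not.1 (mt (π.supp w v u hv) (mt (hE v u) hu))]
  exact π.sum_one w v hv

def ofDiamondChoice (d : List V → V → V → ℝ) (hd : d ∈ G.diamondChoices E) :
    G.Strat G.isDiamond where
  f := d
  nonneg w v u := (hd.1 w v u).1
  supp w v u hv := not_imp_comm.1 (hd.2.1 w v u hv)
  sum_one w v hv := by
    rw [tsum_eq_sum fun u hu => hd.2.1 w v u hv (mt (hE v u) hu)]
    exact hd.2.2 w v hv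

theorem toDiamondChoice_mem (π : G.Strat G.isDiamond) :
    G.toDiamondChoice π ∈ G.diamondChoices E := by
  refine ⟨fun w v u => ?_, fun w v u hv h => ?_, fun w v hv => ?_⟩
  · unfold toDiamondChoice
    split_ifs with hv
    · refine ⟨π.nonneg w v u, ?_⟩
      by_cases hu : u ∈ E v
      · rw [← π.sum_eq_one hE w hv]
        exact Finset.single_le_sum (fun u _ => π.nonneg w v u) hu
      · rw [not_not.1 (mt (π.supp w v u hv) (mt (hE v u) hu))]
        exact zero_le_one
    · exact ⟨le_rfl, zero_le_one⟩
  · simp only [toDiamondChoice, if_pos hv]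
    exact not_not.1 (mt (π.supp w v u hv) h)
  · simp only [toDiamondChoice, if_pos hv]
    exact π.sum_eq_one hE w hv

theorem exists_forall_lt_reachN_of_forall_lt_reachP {c : ℝ} {v : V}
    (h : ∀ π, c < G.reachP σ π T v) : ∃ n, ∀ π, c < G.reachN σ π T n [] v := by
  obtain ⟨n, hn⟩ := (G.isCompact_diamondChoices E).exists_forall_lt_of_monotone
    (f := fun n d => reachWithin E T (G.stepWith σ d) n [] v)
    (fun n => ((continuous_reachWithin E T n [] v).comp
      (G.continuous_stepWith σ)).lowerSemicontinuous)
    (fun d hd => monotone_reachWithin (G.stepWith_nonneg σ fun w v u => (hd.1 w v u).1) [] v)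
    fun d hd => by
      obtain ⟨n, hn⟩ := exists_lt_of_lt_ciSup (h (G.ofDiamondChoice hE d hd))
      exact ⟨n, hn.trans_eq (G.reachN_eq_reachWithin σ hE _ n [] v)⟩
  refine ⟨n, fun π => ?_⟩
  rw [G.reachN_eq_reachWithin σ hE, ← G.stepWith_toDiamondChoice]
  exact hn _ (G.toDiamondChoice_mem hE π)

end SGame

/-- In a finitely-branching stochastic game with reachability objective, for
every vertex `v` and every `ε > 0` there are a strategy `σ` of player Box and
a bound `n` such that against every strategy `π` of player Diamond, the
probability of reaching `T` from `v` within at most `n` steps exceeds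
`val(v) - ε`. -/
theorem box_bounded_step_eps_optimal {V : Type*} (G : SGame V) (T : Set V)
    (hfb : ∀ v, {u | G.edge v u}.Finite) (v : V) :
    ∀ ε : ℝ, 0 < ε → ∃ (σ : G.Strat G.isBox) (n : ℕ),
      ∀ π : G.Strat G.isDiamond, G.val T v - ε < G.reachN σ π T n [] v := by
  intro ε hε
  obtain ⟨σ, hσ⟩ := exists_lt_of_lt_ciSup (sub_lt_self (G.val T v) hε)
  exact ⟨σ, G.exists_forall_lt_reachN_of_forall_lt_reachP σ
    (fun v u => (hfb v).mem_toFinset.2)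
    fun π => hσ.trans_le (ciInf_le (G.bddBelow_range_reachP σ v) π)⟩
end
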